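/- arXiv:2110.11801 — 5 statements merged into one kernel-verified Lean document; each statement's English description precedes it below -/
import Mathlib

section
/- Let u = x_{i_1}···x_{i_d} be a t-spread monomial in n variables (i_1 < ··· < i_d with gaps ≥ t). Suppose there exists an index q ∈ [d] with i_q + 1 ≤ n - (d-q)t, and let q be the maximum such index. Then w = x_{i_1}···x_{i_{q-1}} x_{i_q+1} x_{i_q+1+t} ··· x_{i_q+1+(d-q)t} is a t-spread monomial of degree d in n variables, w <_slex u, and w is the greatest t-spread monomial of degree d that is smaller than u in the squarefree lexicographic order. -/
/-!
Write `w` for the candidate successor. Above `q` the sequence `w` climbs as slowly as a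
`t`-spread sequence can (steps of exactly `t`) starting one above `i q`, which is allowed by
the hypothesis on `q`. If `z` is `t`-spread and `i >_slex z`, first differing at `s`, then
`i s + 1 ≤ z s` and `z` still has to fit `d - 1 - s` steps of size `t` below `n`; by the
maximality of `q` this forces `s ≤ q`. For `s < q` the sequence `w` agrees with `i` up to `s`,
so `w >_slex z` at `s`. For `s = q` the sequence `z` dominates `w` pointwise, and pointwise
domination implies lexicographic domination.
-/

/-- A sequence `i : Fin d → ℕ` represents a `t`-spread monomial in `n` variables. -/
def IsTSpread (n t : ℕ) {d : ℕ} (i : Fin d → ℕ) : Prop :=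
  (∀ k, 1 ≤ i k ∧ i k ≤ n) ∧
  ∀ (j : ℕ) (h : j + 1 < d), i ⟨j, Nat.lt_of_succ_lt h⟩ + t ≤ i ⟨j + 1, h⟩

/-- `SlexGT u v` means `u >_slex v`: at the first position where the support
sequences differ, `u` has the smaller index. -/
def SlexGT {d : ℕ} (u v : Fin d → ℕ) : Prop :=
  ∃ s : Fin d, (∀ r < s, u r = v r) ∧ u s < v s

variable {n t d : ℕ}

theorem slexGT_of_lt {u v : Fin d → ℕ} (h : u < v) : SlexGT u v :=
  Pi.lex_lt_of_lt wellFounded_lt h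

theorem eq_or_slexGT_of_le {u v : Fin d → ℕ} (h : u ≤ v) : u = v ∨ SlexGT u v :=
  h.eq_or_lt.imp_right slexGT_of_lt

namespace IsTSpread

variable {z : Fin d → ℕ}

theorem add_mul_le_of_add_lt (hz : IsTSpread n t z) (a : Fin d) :
    ∀ (m : ℕ) (h : (a : ℕ) + m < d), z a + m * t ≤ z ⟨a + m, h⟩
  | 0, _ => by simp
  | m + 1, h => calc
      z a + (m + 1) * t = z a + m * t + t := by ring
      _ ≤ z ⟨a + m, by omega⟩ + t := by gcongr; exact hz.add_mul_le_of_add_lt a m _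
      _ ≤ z ⟨a + (m + 1), h⟩ := hz.2 (a + m) h

theorem add_mul_le (hz : IsTSpread n t z) {a b : Fin d} (hab : a ≤ b) :
    z a + ((b : ℕ) - a) * t ≤ z b := by
  have hb : b = ⟨a + ((b : ℕ) - a), by omega⟩ := Fin.ext (by simp only; omega)
  conv_rhs => rw [hb]
  exact hz.add_mul_le_of_add_lt a _ _

theorem add_mul_le_bound (hz : IsTSpread n t z) (k : Fin d) :
    z k + (d - 1 - k) * t ≤ n := by
  have hd : d - 1 < d := by have := k.isLt; omega
  calc z k + (d - 1 - k) * t = z k + (((⟨d - 1, hd⟩ : Fin d) : ℕ) - k) * t := rfl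
    _ ≤ z ⟨d - 1, hd⟩ := hz.add_mul_le (Fin.mk_le_mk.2 (by omega))
    _ ≤ n := (hz.1 _).2

end IsTSpread

def tlexSucc (t : ℕ) (i : Fin d → ℕ) (q : Fin d) : Fin d → ℕ :=
  fun k => if (k : ℕ) < q then i k else i q + 1 + ((k : ℕ) - q) * t

section tlexSucc

variable {i : Fin d → ℕ} {q k : Fin d}

theorem tlexSucc_of_lt (hk : k < q) : tlexSucc t i q k = i k :=
  if_pos hk

theorem tlexSucc_of_le (hk : q ≤ k) : tlexSucc t i q k = i q + 1 + ((k : ℕ) - q) * t :=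
  if_neg (not_lt.2 hk)

theorem isTSpread_tlexSucc (hi : IsTSpread n t i) (hq : i q + 1 + (d - 1 - q) * t ≤ n) :
    IsTSpread n t (tlexSucc t i q) := by
  refine ⟨fun k => ?_, fun j hj => ?_⟩
  · rcases lt_or_ge k q with hk | hk
    · simpa only [tlexSucc_of_lt hk] using hi.1 k
    · rw [tlexSucc_of_le hk]
      have : ((k : ℕ) - q) * t ≤ (d - 1 - q) * t := Nat.mul_le_mul_right _ (by omega)
      omega
  · rcases lt_trichotomy (j + 1) q with hjq | hjq | hjq
    · rw [tlexSucc_of_lt (Fin.mk_lt_of_lt_val (by omega)), tlexSucc_of_lt (Fin.mk_lt_of_lt_val hjq)]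
      exact hi.2 j hj
    · have hqj : q = ⟨j + 1, hj⟩ := Fin.ext hjq.symm
      subst hqj
      rw [tlexSucc_of_lt (Fin.mk_lt_mk.2 (Nat.lt_succ_self j)), tlexSucc_of_le le_rfl]
      have := hi.2 j hj
      omega
    · rw [tlexSucc_of_le (Fin.le_def.2 (by simp only; omega)),
        tlexSucc_of_le (Fin.le_def.2 (by simp only; omega))]
      simp only [show j + 1 - q = j - q + 1 by omega, add_mul, one_mul, add_assoc, le_refl]

theorem slexGT_tlexSucc : SlexGT i (tlexSucc t i q) :=
  ⟨q, fun _ hr => (tlexSucc_of_lt hr).symm, by rw [tlexSucc_of_le le_rfl]; omega⟩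

theorem tlexSucc_le {z : Fin d → ℕ} (hz : IsTSpread n t z) (hiz : ∀ r < q, i r = z r)
    (hq : i q < z q) : tlexSucc t i q ≤ z := fun k => by
  rcases lt_or_ge k q with hk | hk
  · rw [tlexSucc_of_lt hk, hiz k hk]
  · rw [tlexSucc_of_le hk]
    exact (Nat.add_le_add_right hq _).trans (hz.add_mul_le hk)

theorem eq_or_slexGT_tlexSucc
    (hqmax : ∀ r : Fin d, q < r → n < i r + 1 + (d - 1 - (r : ℕ)) * t)
    {z : Fin d → ℕ} (hz : IsTSpread n t z) (hiz : SlexGT i z) :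
    z = tlexSucc t i q ∨ SlexGT (tlexSucc t i q) z := by
  obtain ⟨s, hs_eq, hs_lt⟩ := hiz
  have hsq : s ≤ q := not_lt.1 fun hqs => by
    have := hz.add_mul_le_bound s
    have := hqmax s hqs
    omega
  rcases hsq.lt_or_eq with hsq | rfl
  · refine .inr ⟨s, fun r hr => ?_, ?_⟩
    · rw [tlexSucc_of_lt (hr.trans hsq), hs_eq r hr]
    · rwa [tlexSucc_of_lt hsq]
  · exact (eq_or_slexGT_of_le (tlexSucc_le hz hs_eq hs_lt)).imp_left Eq.symm

end tlexSucc

theorem tlex_successor_general (n d t : ℕ) (i : Fin d → ℕ) (hi : IsTSpread n t i)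
    (q : Fin d) (hq : i q + 1 + (d - 1 - (q : ℕ)) * t ≤ n)
    (hqmax : ∀ r : Fin d, q < r → n < i r + 1 + (d - 1 - (r : ℕ)) * t)
    (w : Fin d → ℕ)
    (hw : w = fun k : Fin d =>
      if (k : ℕ) < (q : ℕ) then i k else i q + 1 + ((k : ℕ) - (q : ℕ)) * t) :
    IsTSpread n t w ∧ SlexGT i w ∧
      ∀ z : Fin d → ℕ, IsTSpread n t z → SlexGT i z → z = w ∨ SlexGT w z := by
  have hw : w = tlexSucc t i q := hw
  subst hw
  exact ⟨isTSpread_tlexSucc hi hq, slexGT_tlexSucc,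
    fun _ hz hiz => eq_or_slexGT_tlexSucc hqmax hz hiz⟩

/-- The `t`-lex successor: if `q` is the maximal index with
`i_q + 1 ≤ n - (d-q)t`, then `w = x_{i_1}⋯x_{i_{q-1}} x_{i_q+1} x_{i_q+1+t} ⋯
x_{i_q+1+(d-q)t}` is a `t`-spread monomial, `w <_slex u`, and `w` is the
greatest `t`-spread monomial of degree `d` smaller than `u`. -/
theorem tlex_successor (n d t : ℕ) (ht : 1 ≤ t) (hd : 1 ≤ d)
    (hn : 1 + (d - 1) * t ≤ n) (i : Fin d → ℕ) (hi : IsTSpread n t i)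
    (q : Fin d) (hq : i q + 1 + (d - 1 - (q : ℕ)) * t ≤ n)
    (hqmax : ∀ r : Fin d, q < r → n < i r + 1 + (d - 1 - (r : ℕ)) * t)
    (w : Fin d → ℕ)
    (hw : w = fun k : Fin d =>
      if (k : ℕ) < (q : ℕ) then i k else i q + 1 + ((k : ℕ) - (q : ℕ)) * t) :
    IsTSpread n t w ∧ SlexGT i w ∧
      ∀ z : Fin d → ℕ, IsTSpread n t z → SlexGT i z → z = w ∨ SlexGT w z :=
  tlex_successor_general n d t i hi q hq hqmax w hw
end

section
/- Let v = x_{j_1}···x_{j_d} and u = x_{i_1}···x_{i_d} be t-spread monomials of degree d in n variables with v ≠ u and v ≥_Borel u (i.e., j_s ≤ i_s for all s). Let q be the maximum index in [d] with j_q + 1 ≤ i_q. Then w = x_{j_1}···x_{j_{q-1}} x_{j_q+1} x_{j_q+1+t} ··· x_{j_q+1+(d-q)t} is a well-defined t-spread monomial of degree d, and w ≥_Borel u. -/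
def HasGapsAtLeast (t : ℕ) {d : ℕ} (i : Fin d → ℕ) : Prop :=
  ∀ (j : ℕ) (h : j + 1 < d), i ⟨j, Nat.lt_of_succ_lt h⟩ + t ≤ i ⟨j + 1, h⟩

theorem HasGapsAtLeast.add_sub_mul_le {t d : ℕ} {i : Fin d → ℕ} (hi : HasGapsAtLeast t i)
    {a b : Fin d} (hab : a ≤ b) : i a + ((b : ℕ) - a) * t ≤ i b := by
  obtain ⟨b, hb⟩ := b
  induction b with
  | zero =>
    obtain rfl : a = ⟨0, hb⟩ := Fin.ext (by simpa [Fin.le_iff_val_le_val] using hab)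
    simp
  | succ b ih =>
    have hab : (a : ℕ) ≤ b + 1 := hab
    rcases hab.eq_or_lt with hEq | hLt
    · obtain rfl : a = ⟨b + 1, hb⟩ := Fin.ext hEq
      simp
    · have hprev := ih (Nat.lt_of_succ_lt hb) (Fin.le_iff_val_le_val.mpr (Nat.le_of_lt_succ hLt))
      have hstep := hi b hb
      have hsub : b + 1 - (a : ℕ) = (b - a) + 1 := by omega
      simp only [hsub, Nat.succ_mul] at hprev ⊢
      omega

def borelSucc (t : ℕ) {d : ℕ} (j : Fin d → ℕ) (q : Fin d) : Fin d → ℕ :=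
  fun k => if (k : ℕ) < (q : ℕ) then j k else j q + 1 + ((k : ℕ) - (q : ℕ)) * t

section borelSucc

variable {t d : ℕ} {j : Fin d → ℕ} {q : Fin d}

theorem one_le_borelSucc (hj : ∀ k, 1 ≤ j k) (k : Fin d) : 1 ≤ borelSucc t j q k := by
  unfold borelSucc
  split_ifs
  · exact hj k
  · omega

theorem HasGapsAtLeast.borelSucc (hj : HasGapsAtLeast t j) :
    HasGapsAtLeast t (borelSucc t j q) := by
  intro a ha
  have hstep := hj a ha
  unfold _root_.borelSucc
  by_cases hbelow : a + 1 < (q : ℕ)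
  · simp only [show a < (q : ℕ) by omega, hbelow, if_true] at hstep ⊢
    exact hstep
  by_cases hat : a + 1 = (q : ℕ)
  · obtain rfl : (⟨a + 1, ha⟩ : Fin d) = q := Fin.ext hat
    simp only [show a < a + 1 by omega, hbelow, if_true, if_false, Nat.sub_self, zero_mul]
    omega
  · have hsub : a + 1 - (q : ℕ) = (a - q) + 1 := by omega
    simp only [show ¬ a < (q : ℕ) by omega, hbelow, if_false, hsub, Nat.succ_mul]
    omega

theorem borelSucc_le {i : Fin d → ℕ} (hi : HasGapsAtLeast t i) (hborel : ∀ s, j s ≤ i s)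
    (hq : j q + 1 ≤ i q) (s : Fin d) : borelSucc t j q s ≤ i s := by
  unfold borelSucc
  split_ifs with hs
  · exact hborel s
  · have hgrowth := hi.add_sub_mul_le (a := q) (b := s) (Fin.le_iff_val_le_val.mpr (by omega))
    omega

end borelSucc

theorem tborel_successor_general (n d t : ℕ)
    (j i : Fin d → ℕ) (hj : IsTSpread n t j) (hi : IsTSpread n t i)
    (hborel : ∀ s : Fin d, j s ≤ i s)
    (q : Fin d) (hq : j q + 1 ≤ i q)
    (w : Fin d → ℕ)
    (hw : w = fun k : Fin d =>
      if (k : ℕ) < (q : ℕ) then j k else j q + 1 + ((k : ℕ) - (q : ℕ)) * t) :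
    IsTSpread n t w ∧ ∀ s : Fin d, w s ≤ i s := by
  have hw_le : ∀ s, w s ≤ i s := hw ▸ borelSucc_le hi.2 hborel hq
  refine ⟨⟨fun k => ⟨?_, (hw_le k).trans (hi.1 k).2⟩, ?_⟩, hw_le⟩
  · exact hw ▸ one_le_borelSucc (fun k => (hj.1 k).1) k
  · exact hw ▸ HasGapsAtLeast.borelSucc (q := q) hj.2

/-- Let `v = x_{j_1}⋯x_{j_d} ≥_Borel u = x_{i_1}⋯x_{i_d}` with `v ≠ u`, and let
`q` be the maximal index with `j_q + 1 ≤ i_q`.  Then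
`w = x_{j_1}⋯x_{j_{q-1}} x_{j_q+1} x_{j_q+1+t} ⋯ x_{j_q+1+(d-q)t}` is a
well-defined `t`-spread monomial of degree `d` and `w ≥_Borel u`. -/
theorem tborel_successor (n d t : ℕ) (ht : 1 ≤ t) (hd : 1 ≤ d)
    (hn : 1 + (d - 1) * t ≤ n)
    (j i : Fin d → ℕ) (hj : IsTSpread n t j) (hi : IsTSpread n t i)
    (hne : j ≠ i) (hborel : ∀ s : Fin d, j s ≤ i s)
    (q : Fin d) (hq : j q + 1 ≤ i q)
    (hqmax : ∀ r : Fin d, q < r → i r ≤ j r)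
    (w : Fin d → ℕ)
    (hw : w = fun k : Fin d =>
      if (k : ℕ) < (q : ℕ) then j k else j q + 1 + ((k : ℕ) - (q : ℕ)) * t) :
    IsTSpread n t w ∧ ∀ s : Fin d, w s ≤ i s :=
  tborel_successor_general n d t j i hj hi hborel q hq w hw
end

section
/- For a t-spread monomial u = x_{i_1}···x_{i_d} in M_{n,d,t}, the cardinality of the initial t-lex segment L_t{u} = {w ∈ M_{n,d,t} : w ≥_slex u} equals Σ_{s_1=1}^{i_1-1} C(n-(d-1)(t-1)-s_1, d-1) + Σ_{s_2=1}^{i_2-i_1-t} C(n-(d-1)(t-1)-i_1-s_2, d-2) + ··· + Σ_{s_k=1}^{i_k-i_{k-1}-t} C(n-(d-k+1)(t-1)-i_{k-1}-s_k, d-k) + ··· + Σ_{s_d=1}^{i_d-i_{d-1}-t} C(n-(t-1)-i_{d-1}-s_d, 0) + 1. -/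
/-!
Peel off the first index. A monomial `w` of the segment of `u = x_{i₁} u'` either starts with
some `v < i₁`, and then its tail is an arbitrary `t`-spread monomial of degree `d - 1` in the
variables `x_{v+t}, …, x_n`, of which there are `C(n - (d-1)(t-1) - v, d - 1)` by the
hockey-stick identity; or it starts with `i₁`, and then its tail lies in the segment of `u'`
among the variables `x_{i₁+t}, …, x_n`. Unrolling this recursion gives one sum per index, and
shifting `v` turns these sums into the ones of the statement.
-/

open Finset

theorem Nat.card_eq_sum_card_fin_cons {α : Type*} {d : ℕ} {s : Set (Fin (d + 1) → α)}
    (hs : s.Finite) (S : Finset α) (hS : ∀ w ∈ s, w 0 ∈ S) :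
    Nat.card s = ∑ v ∈ S, Nat.card (Fin.cons v ⁻¹' s) := by
  have : ∀ v, Finite (Fin.cons v ⁻¹' s) := fun v =>
    (hs.preimage (Fin.cons_right_injective v).injOn).to_subtype
  rw [← Finset.sum_coe_sort S, ← Nat.card_sigma]
  exact Nat.card_congr
    { toFun w := ⟨⟨w.1 0, hS _ w.2⟩, ⟨Fin.tail w.1, by simp⟩⟩
      invFun p := ⟨Fin.cons p.1 p.2.1, p.2.2⟩
      left_inv w := Subtype.ext (Fin.cons_self_tail _)
      right_inv _ := rfl }

theorem sum_Ico_choose_tsub (a N m : ℕ) :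
    ∑ u ∈ Ico a (N + 1), (N - u).choose m = (N + 1 - a).choose (m + 1) := by
  rw [sum_Ico_reflect (fun x => x.choose m) a le_rfl, Nat.sub_self, ← range_eq_Ico]
  induction N + 1 - a with
  | zero => simp
  | succ K ih => rw [sum_range_succ, ih, Nat.choose_succ_succ', add_comm]

def IsTSpreadFrom (n t a : ℕ) {d : ℕ} (w : Fin d → ℕ) : Prop :=
  (∀ k, a ≤ w k ∧ w k ≤ n) ∧
  ∀ (j : ℕ) (h : j + 1 < d), w ⟨j, Nat.lt_of_succ_lt h⟩ + t ≤ w ⟨j + 1, h⟩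

def SlexGE {d : ℕ} (u v : Fin d → ℕ) : Prop :=
  u = v ∨ SlexGT u v

def slexSegment (n t a : ℕ) {d : ℕ} (i : Fin d → ℕ) : Set (Fin d → ℕ) :=
  {w | IsTSpreadFrom n t a w ∧ SlexGE w i}

section

variable {n t a d : ℕ}

theorem finite_setOf_isTSpreadFrom : {w : Fin d → ℕ | IsTSpreadFrom n t a w}.Finite :=
  (Set.Finite.pi fun _ => Set.finite_Iic n).subset fun _ hw k _ => (hw.1 k).2

theorem IsTSpreadFrom.head_add_le {w : Fin (d + 1) → ℕ} (hw : IsTSpreadFrom n t a w)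
    (k : Fin d) : w 0 + t ≤ w k.succ := by
  obtain ⟨k, hk⟩ := k
  induction k with
  | zero => exact hw.2 0 (by omega)
  | succ k ih => exact (ih (by omega)).trans (le_self_add.trans (hw.2 (k + 1) (by omega)))

theorem isTSpreadFrom_cons_iff {v : ℕ} {w : Fin d → ℕ} :
    IsTSpreadFrom n t a (Fin.cons v w : Fin (d + 1) → ℕ) ↔
      a ≤ v ∧ v ≤ n ∧ IsTSpreadFrom n t (v + t) w := by
  constructor
  · intro hw
    refine ⟨(hw.1 0).1, (hw.1 0).2, fun k => ⟨hw.head_add_le k, (hw.1 k.succ).2⟩,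
      fun j h => hw.2 (j + 1) (by omega)⟩
  · rintro ⟨hav, hvn, hw⟩
    refine ⟨fun k => ?_, ?_⟩
    · cases k using Fin.cases with
      | zero => exact ⟨hav, hvn⟩
      | succ k => exact ⟨le_add_right hav |>.trans (hw.1 k).1, (hw.1 k).2⟩
    rintro (_ | j) h
    · exact (hw.1 ⟨0, by omega⟩).1
    · exact hw.2 j (by omega)

theorem slexGT_cons_iff {v v' : ℕ} {w w' : Fin d → ℕ} :
    SlexGT (Fin.cons v w : Fin (d + 1) → ℕ) (Fin.cons v' w') ↔ v < v' ∨ v = v' ∧ SlexGT w w' := by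
  constructor
  · rintro ⟨s, hagree, hlt⟩
    cases s using Fin.cases with
    | zero => exact Or.inl (by simpa using hlt)
    | succ s =>
      refine Or.inr ⟨by simpa using hagree 0 s.succ_pos, s, fun r hr => ?_, by simpa using hlt⟩
      simpa using hagree r.succ (Fin.succ_lt_succ_iff.2 hr)
  · rintro (hlt | ⟨rfl, s, hagree, hlt⟩)
    · exact ⟨0, fun r hr => absurd hr r.not_lt_zero, by simpa using hlt⟩
    · refine ⟨s.succ, fun r hr => ?_, by simpa using hlt⟩
      cases r using Fin.cases with
      | zero => rfl
      | succ r => simpa using hagree r (Fin.succ_lt_succ_iff.1 hr)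

theorem slexGE_cons_iff {v v' : ℕ} {w w' : Fin d → ℕ} :
    SlexGE (Fin.cons v w : Fin (d + 1) → ℕ) (Fin.cons v' w') ↔ v < v' ∨ v = v' ∧ SlexGE w w' := by
  rw [SlexGE, SlexGE, Fin.cons_inj, slexGT_cons_iff]
  tauto

theorem card_isTSpreadFrom_add (ht : 1 ≤ t) (m v : ℕ) :
    Nat.card {w : Fin m → ℕ | IsTSpreadFrom n t (v + t) w} = (n - m * (t - 1) - v).choose m := by
  induction m generalizing v with
  | zero =>
    have : {w : Fin 0 → ℕ | IsTSpreadFrom n t (v + t) w} = Set.univ :=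
      Set.eq_univ_of_forall fun w => ⟨fun k => k.elim0, fun j h => by omega⟩
    simp [this]
  | succ m ih =>
    rw [Nat.card_eq_sum_card_fin_cons finite_setOf_isTSpreadFrom (Ico (v + t) (n + 1))
      fun w hw => mem_Ico.2 ⟨(hw.1 0).1, Nat.lt_succ_of_le (hw.1 0).2⟩]
    have hfiber : ∀ u ∈ Ico (v + t) (n + 1),
        Nat.card (Fin.cons u ⁻¹' {w : Fin (m + 1) → ℕ | IsTSpreadFrom n t (v + t) w}) =
          (n - m * (t - 1) - u).choose m := by
      intro u hu
      rw [mem_Ico] at hu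
      rw [← ih]
      congr
      ext w
      simp [isTSpreadFrom_cons_iff, hu.1, Nat.le_of_lt_succ hu.2]
    rw [sum_congr rfl hfiber]
    have hvanish : ∑ u ∈ Ico (v + t) (n + 1), (n - m * (t - 1) - u).choose m =
        ∑ u ∈ Ico (v + t) (n - m * (t - 1) + 1), (n - m * (t - 1) - u).choose m := by
      refine (sum_subset (Ico_subset_Ico_right (by omega)) fun u hu hu' => ?_).symm
      simp only [mem_Ico, not_and, not_lt] at hu hu'
      rcases m.eq_zero_or_pos with rfl | hm
      · omega
      · exact Nat.choose_eq_zero_of_lt (by omega)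
    rw [hvanish, sum_Ico_choose_tsub, Nat.succ_mul]
    congr 1
    omega

theorem card_slexSegment_cons (ht : 1 ≤ t) {i₀ : ℕ} {i : Fin d → ℕ} (ha : a ≤ i₀)
    (hn : i₀ ≤ n) :
    Nat.card (slexSegment n t a (Fin.cons i₀ i : Fin (d + 1) → ℕ)) =
      ∑ v ∈ Ico a i₀, (n - d * (t - 1) - v).choose d +
        Nat.card (slexSegment n t (i₀ + t) i) := by
  have hmem : ∀ {v} {w : Fin d → ℕ}, Fin.cons v w ∈ slexSegment n t a (Fin.cons i₀ i) ↔
      (a ≤ v ∧ v ≤ n ∧ IsTSpreadFrom n t (v + t) w) ∧ (v < i₀ ∨ v = i₀ ∧ SlexGE w i) := by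
    intro v w
    simp only [slexSegment, Set.mem_ofPred_eq, isTSpreadFrom_cons_iff, slexGE_cons_iff]
  have hhead : ∀ w ∈ slexSegment n t a (Fin.cons i₀ i), w 0 ∈ Ico a (i₀ + 1) := by
    intro w hw
    rw [← Fin.cons_self_tail w, hmem] at hw
    rw [mem_Ico]
    omega
  rw [Nat.card_eq_sum_card_fin_cons (finite_setOf_isTSpreadFrom.subset fun _ hw => hw.1) _ hhead,
    sum_Ico_succ_top ha]
  congr 1
  · refine sum_congr rfl fun v hv => ?_
    rw [mem_Ico] at hv
    rw [← card_isTSpreadFrom_add ht]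
    congr
    ext w
    rw [Set.mem_preimage, hmem, Set.mem_ofPred_eq]
    exact ⟨fun h => h.1.2.2, fun h => ⟨⟨hv.1, by omega, h⟩, Or.inl hv.2⟩⟩
  · congr
    ext w
    rw [Set.mem_preimage, hmem]
    simp [slexSegment, ha, hn]

/-- The least `k`-th index of a `w ∈ slexSegment n t a i` that agrees with `i` before `k`. -/
def spreadLowerBound (t a : ℕ) {d : ℕ} (i : Fin d → ℕ) (k : Fin d) : ℕ :=
  if (k : ℕ) = 0 then a else i ⟨(k : ℕ) - 1, lt_of_le_of_lt (Nat.sub_le _ _) k.isLt⟩ + t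

theorem spreadLowerBound_cons_succ {i₀ : ℕ} (i : Fin d → ℕ) (k : Fin d) :
    spreadLowerBound t a (Fin.cons i₀ i : Fin (d + 1) → ℕ) k.succ =
      spreadLowerBound t (i₀ + t) i k := by
  obtain ⟨_ | k, hk⟩ := k <;> rfl

theorem card_slexSegment (ht : 1 ≤ t) {i : Fin d → ℕ} (hi : IsTSpreadFrom n t a i) :
    Nat.card (slexSegment n t a i) =
      ∑ k : Fin d, ∑ v ∈ Ico (spreadLowerBound t a i k) (i k),
        (n - (d - 1 - k) * (t - 1) - v).choose (d - 1 - k) + 1 := by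
  induction d generalizing a with
  | zero =>
    have : slexSegment n t a i = {i} :=
      Set.eq_singleton_iff_unique_mem.2 ⟨⟨hi, Or.inl rfl⟩, fun w _ => Subsingleton.elim w i⟩
    simp [this]
  | succ d ih =>
    cases i using Fin.consCases with
    | cons i₀ i =>
      rw [isTSpreadFrom_cons_iff] at hi
      rw [card_slexSegment_cons ht hi.1 hi.2.1, ih hi.2.2, Fin.sum_univ_succ, ← add_assoc]
      congr 2
      refine sum_congr rfl fun k _ => ?_
      rw [spreadLowerBound_cons_succ, Fin.cons_succ, Fin.val_succ,
        show d + 1 - 1 - (k + 1) = d - 1 - k by omega]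

theorem sum_Ico_choose_eq_sum_Icc (ht : 1 ≤ t) (m b c : ℕ) :
    ∑ v ∈ Ico (b + t) c, (n - m * (t - 1) - v).choose m =
      ∑ s ∈ Icc 1 (c - b - t), (n - (m + 1) * (t - 1) - b - s).choose m := by
  refine sum_nbij' (· - (b + t - 1)) (· + (b + t - 1)) ?_ ?_ ?_ ?_ fun v hv => ?_ <;>
    simp only [mem_Ico, mem_Icc] at * <;> try omega
  rw [Nat.succ_mul]
  congr 1
  omega

end

theorem card_tlex_segment_general (n d t : ℕ) (ht : 1 ≤ t) (hd : 1 ≤ d)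
    (i : Fin d → ℕ) (hi : IsTSpread n t i) :
    Nat.card {w : Fin d → ℕ // IsTSpread n t w ∧ (w = i ∨ SlexGT w i)} =
      (∑ s ∈ Finset.Icc 1 (i ⟨0, hd⟩ - 1),
          Nat.choose (n - (d - 1) * (t - 1) - s) (d - 1)) +
      (∑ k ∈ Finset.univ.filter (fun k : Fin d => 1 ≤ (k : ℕ)),
          ∑ s ∈ Finset.Icc 1
              (i k - i ⟨(k : ℕ) - 1, lt_of_le_of_lt (Nat.sub_le _ _) k.isLt⟩ - t),
            Nat.choose
              (n - (d - (k : ℕ)) * (t - 1) -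
                i ⟨(k : ℕ) - 1, lt_of_le_of_lt (Nat.sub_le _ _) k.isLt⟩ - s)
              (d - 1 - (k : ℕ))) + 1 := by
  have hfilter : univ.filter (fun k : Fin d => 1 ≤ (k : ℕ)) = univ \ {⟨0, hd⟩} := by
    ext k
    simp only [mem_filter, mem_univ, true_and, mem_sdiff, mem_singleton, Fin.ext_iff]
    omega
  change Nat.card (slexSegment n t 1 i) = _
  rw [card_slexSegment ht hi, sum_eq_add_sum_sdiff_singleton_of_mem (mem_univ ⟨0, hd⟩), ← hfilter]
  -- the `k = 0` summands agree by `rfl`: `Ico 1 c` and `Icc 1 (c - 1)` unfold to the same list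
  congr 2
  refine sum_congr rfl fun k hk => ?_
  have hk : 1 ≤ (k : ℕ) := (mem_filter.1 hk).2
  rw [spreadLowerBound, if_neg (by omega), sum_Ico_choose_eq_sum_Icc ht,
    show d - 1 - k + 1 = d - k by omega]

/-- Counting formula for the initial `t`-lex segment `L_t{u}`:
`|L_t{u}| = Σ_{s=1}^{i_1-1} C(n-(d-1)(t-1)-s, d-1)
  + Σ_{k=2}^{d} Σ_{s=1}^{i_k-i_{k-1}-t} C(n-(d-k+1)(t-1)-i_{k-1}-s, d-k) + 1`. -/
theorem card_tlex_segment (n d t : ℕ) (ht : 1 ≤ t) (hd : 1 ≤ d)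
    (hn : 1 + (d - 1) * t ≤ n) (i : Fin d → ℕ) (hi : IsTSpread n t i) :
    Nat.card {w : Fin d → ℕ // IsTSpread n t w ∧ (w = i ∨ SlexGT w i)} =
      (∑ s ∈ Finset.Icc 1 (i ⟨0, hd⟩ - 1),
          Nat.choose (n - (d - 1) * (t - 1) - s) (d - 1)) +
      (∑ k ∈ Finset.univ.filter (fun k : Fin d => 1 ≤ (k : ℕ)),
          ∑ s ∈ Finset.Icc 1
              (i k - i ⟨(k : ℕ) - 1, lt_of_le_of_lt (Nat.sub_le _ _) k.isLt⟩ - t),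
            Nat.choose
              (n - (d - (k : ℕ)) * (t - 1) -
                i ⟨(k : ℕ) - 1, lt_of_le_of_lt (Nat.sub_le _ _) k.isLt⟩ - s)
              (d - 1 - (k : ℕ))) + 1 :=
  card_tlex_segment_general n d t ht hd i hi
end

section
/- For a t-spread monomial u = x_{i_1}···x_{i_d} with max(u) = i_d =: n̄, the cardinality of the t-strongly stable set B_t{u} = {w ∈ M_{n̄,d,t} : w ≥_Borel u} equals the nested sum Σ_{s_1=1}^{i_1} Σ_{s_2=1}^{i_2-s_1-t+1} ··· Σ_{s_{d-1}=1}^{i_{d-1}-s_{[d-2]}-(d-2)(t-1)} ( n̄ - (d-1)(t-1) - s_{[d-1]} ), where s_{[k]} = s_1 + s_2 + ··· + s_k. -/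
/-!
Record a `t`-spread sequence `w` with `w₀ ≥ 1` by its gaps `s₀ = w₀`,
`s_k = w_k - w_{k-1} - (t - 1)`: this is a bijection onto the vectors with all `s_k ≥ 1`, with
inverse `w_k = s₀ + ⋯ + s_k + k (t - 1)`. The constraint `w ≤ u` becomes
`s₀ + ⋯ + s_k + k (t - 1) ≤ u_k`, and since `u` is increasing it also gives `w_k ≤ max u`.
Once all gaps but the last are fixed, the last gap `g` ranges over
`1 ≤ g ≤ n̄ - (d - 1)(t - 1) - s_{[d-1]}`, which is the summand.
-/

open Finset

theorem IsTSpread.monotone {n t m : ℕ} {a : Fin (m + 1) → ℕ} (ha : IsTSpread n t a) :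
    Monotone a :=
  Fin.monotone_iff_le_succ.2 fun k => (Nat.le_add_right _ _).trans (ha.2 k (by omega))

namespace TSpread

variable {m : ℕ} (t : ℕ)

def ofGaps (s : Fin m → ℕ) (k : Fin m) : ℕ :=
  s k + ∑ p ∈ univ.filter (fun p : Fin m => p < k), s p + k * (t - 1)

def gaps (a : Fin m → ℕ) (k : Fin m) : ℕ :=
  if h : (k : ℕ) = 0 then a k else a k - a ⟨k - 1, by omega⟩ - (t - 1)

def GapsBelow (i σ : Fin m → ℕ) : Prop :=
  ∀ k, 1 ≤ σ k ∧ ofGaps t σ k ≤ i k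

instance (i : Fin m → ℕ) : DecidablePred (GapsBelow t i) :=
  fun σ => inferInstanceAs (Decidable (∀ k, 1 ≤ σ k ∧ ofGaps t σ k ≤ i k))

theorem sum_filter_lt_succ (s : Fin m → ℕ) {j : ℕ} (h : j + 1 < m) :
    ∑ p ∈ univ.filter (fun p : Fin m => p < ⟨j + 1, h⟩), s p =
      ∑ p ∈ univ.filter (fun p : Fin m => p < ⟨j, by omega⟩), s p + s ⟨j, by omega⟩ := by
  rw [add_comm (∑ p ∈ _, s p), ← sum_insert (by simp)]
  congr 1
  ext p
  simp only [mem_filter, mem_univ, true_and, mem_insert, Fin.lt_def, Fin.ext_iff]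
  omega

theorem ofGaps_zero (s : Fin m → ℕ) (h : 0 < m) : ofGaps t s ⟨0, h⟩ = s ⟨0, h⟩ := by
  simp [ofGaps, Fin.lt_def]

theorem ofGaps_succ (s : Fin m → ℕ) {j : ℕ} (h : j + 1 < m) :
    ofGaps t s ⟨j + 1, h⟩ = ofGaps t s ⟨j, by omega⟩ + s ⟨j + 1, h⟩ + (t - 1) := by
  simp only [ofGaps, sum_filter_lt_succ s h, add_one_mul]
  omega

theorem le_ofGaps (s : Fin m → ℕ) (k : Fin m) : s k ≤ ofGaps t s k := by
  unfold ofGaps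
  omega

theorem gaps_zero (a : Fin m → ℕ) (h : 0 < m) : gaps t a ⟨0, h⟩ = a ⟨0, h⟩ :=
  dif_pos rfl

theorem gaps_succ (a : Fin m → ℕ) {j : ℕ} (h : j + 1 < m) :
    gaps t a ⟨j + 1, h⟩ = a ⟨j + 1, h⟩ - a ⟨j, by omega⟩ - (t - 1) :=
  dif_neg j.succ_ne_zero

theorem gaps_ofGaps (s : Fin m → ℕ) : gaps t (ofGaps t s) = s := by
  funext ⟨k, hk⟩
  cases k with
  | zero => rw [gaps_zero, ofGaps_zero]
  | succ j =>
    rw [gaps_succ, ofGaps_succ]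
    omega

theorem ofGaps_gaps {n : ℕ} {a : Fin m → ℕ} (ha : IsTSpread n t a) :
    ofGaps t (gaps t a) = a := by
  funext ⟨k, hk⟩
  induction k with
  | zero => rw [ofGaps_zero, gaps_zero]
  | succ j ih =>
    have := ha.2 j hk
    rw [ofGaps_succ, ih, gaps_succ]
    omega

theorem one_le_gaps {n : ℕ} (ht : 1 ≤ t) {a : Fin m → ℕ} (ha : IsTSpread n t a) (k : Fin m) :
    1 ≤ gaps t a k := by
  rcases k with ⟨_ | j, hk⟩
  · rw [gaps_zero]
    exact (ha.1 _).1
  · have := ha.2 j hk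
    rw [gaps_succ]
    omega

theorem isTSpread_ofGaps {n : ℕ} {s : Fin m → ℕ} (hs : ∀ k, 1 ≤ s k)
    (hn : ∀ k, ofGaps t s k ≤ n) : IsTSpread n t (ofGaps t s) := by
  refine ⟨fun k => ⟨(hs k).trans (le_ofGaps t s k), hn k⟩, fun j hj => ?_⟩
  have := hs ⟨j + 1, hj⟩
  rw [ofGaps_succ t s hj]
  omega

theorem ofGaps_castSucc (σ : Fin (m + 1) → ℕ) (k : Fin m) :
    ofGaps t σ k.castSucc = ofGaps t (Fin.init σ) k := by
  simp [ofGaps, sum_filter, Fin.sum_univ_castSucc, Fin.init, (Fin.castSucc_lt_last k).not_gt]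

theorem ofGaps_last (σ : Fin (m + 1) → ℕ) :
    ofGaps t σ (Fin.last m) = ∑ p, Fin.init σ p + σ (Fin.last m) + m * (t - 1) := by
  simp only [ofGaps, sum_filter, Fin.sum_univ_castSucc, Fin.castSucc_lt_last, ↓reduceIte,
    lt_self_iff_false, add_zero, Fin.val_last, Fin.init]
  ring

theorem gapsBelow_snoc_iff (i : Fin (m + 1) → ℕ) (s : Fin m → ℕ) (g : ℕ) :
    GapsBelow t i (Fin.snoc s g : Fin (m + 1) → ℕ) ↔
      GapsBelow t (Fin.init i) s ∧ 1 ≤ g ∧ ∑ p, s p + g + m * (t - 1) ≤ i (Fin.last m) := by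
  simp only [GapsBelow, Fin.forall_fin_succ', ofGaps_castSucc, ofGaps_last, Fin.init_snoc,
    Fin.snoc_castSucc, Fin.snoc_last, Fin.init]

def gapVectors (i : Fin (m + 1) → ℕ) : Finset (Fin m → ℕ) :=
  (Fintype.piFinset fun _ => Icc 1 (i (Fin.last m))).filter (GapsBelow t (Fin.init i))

variable {t}

theorem mem_sigma_gapVectors_iff (i : Fin (m + 1) → ℕ) (hi : ∀ k, i k ≤ i (Fin.last m))
    (s : Fin m → ℕ) (g : ℕ) :
    (⟨s, g⟩ : (_ : Fin m → ℕ) × ℕ) ∈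
        ((gapVectors t i).sigma fun s => Icc 1 (i (Fin.last m) - m * (t - 1) - ∑ p, s p)) ↔
      GapsBelow t i (Fin.snoc s g : Fin (m + 1) → ℕ) := by
  rw [gapsBelow_snoc_iff]
  simp only [gapVectors, mem_sigma, mem_filter, Fintype.mem_piFinset, mem_Icc]
  constructor
  · rintro ⟨⟨-, hs⟩, hg⟩
    exact ⟨hs, hg.1, by omega⟩
  · rintro ⟨hs, hg⟩
    refine ⟨⟨fun k => ⟨(hs k).1, ?_⟩, hs⟩, hg.1, by omega⟩
    exact (le_ofGaps t s k).trans ((hs k).2.trans (hi _))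

def gapsEquiv (ht : 1 ≤ t) {n : ℕ} (i : Fin m → ℕ) (hi : ∀ k, i k ≤ n) :
    {a : Fin m → ℕ // IsTSpread n t a ∧ ∀ k, a k ≤ i k} ≃ {σ : Fin m → ℕ // GapsBelow t i σ} where
  toFun a := ⟨gaps t a.1, fun k =>
    ⟨one_le_gaps t ht a.2.1 k, by rw [ofGaps_gaps t a.2.1]; exact a.2.2 k⟩⟩
  invFun σ := ⟨ofGaps t σ.1,
    isTSpread_ofGaps t (fun k => (σ.2 k).1) (fun k => (σ.2 k).2.trans (hi k)),
    fun k => (σ.2 k).2⟩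
  left_inv a := Subtype.ext (ofGaps_gaps t a.2.1)
  right_inv σ := Subtype.ext (gaps_ofGaps t σ.1)

def gapsBelowEquivSigma (i : Fin (m + 1) → ℕ) (hi : ∀ k, i k ≤ i (Fin.last m)) :
    {σ : Fin (m + 1) → ℕ // GapsBelow t i σ} ≃
      (gapVectors t i).sigma fun s => Icc 1 (i (Fin.last m) - m * (t - 1) - ∑ p, s p) where
  toFun σ := ⟨⟨Fin.init σ.1, σ.1 (Fin.last m)⟩,
    (mem_sigma_gapVectors_iff i hi _ _).2 (by rw [Fin.snoc_init_self]; exact σ.2)⟩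
  invFun x := ⟨Fin.snoc x.1.1 x.1.2, (mem_sigma_gapVectors_iff i hi _ _).1 x.2⟩
  left_inv σ := Subtype.ext (Fin.snoc_init_self σ.1)
  right_inv x := by simp

theorem card_isTSpread_le (ht : 1 ≤ t) (i : Fin (m + 1) → ℕ) (hi : ∀ k, i k ≤ i (Fin.last m)) :
    Nat.card {w : Fin (m + 1) → ℕ // IsTSpread (i (Fin.last m)) t w ∧ ∀ k, w k ≤ i k} =
      ∑ s ∈ gapVectors t i, (i (Fin.last m) - m * (t - 1) - ∑ p, s p) := by
  rw [Nat.card_congr ((gapsEquiv ht i hi).trans (gapsBelowEquivSigma i hi)),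
    Nat.card_eq_fintype_card, Fintype.card_coe, card_sigma]
  simp only [Nat.card_Icc, Nat.add_sub_cancel]

end TSpread

/-- Counting formula for the `t`-strongly stable set `B_t{u}`:
with `n̄ = max(u) = i_d`,
`|B_t{u}| = Σ_{s_1=1}^{i_1} Σ_{s_2=1}^{i_2-s_1-t+1} ⋯
  Σ_{s_{d-1}=1}^{i_{d-1}-s_{[d-2]}-(d-2)(t-1)} (n̄ - (d-1)(t-1) - s_{[d-1]})`,
where `s_{[k]} = s_1 + ⋯ + s_k`.  The nested sum is realized as a sum over all
tuples `(s_1,…,s_{d-1})` satisfying the range constraints. -/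
theorem card_tstrongly_stable (n d t : ℕ) (ht : 1 ≤ t) (hd : 2 ≤ d)
    (i : Fin d → ℕ) (hi : IsTSpread n t i) :
    Nat.card {w : Fin d → ℕ //
        IsTSpread (i ⟨d - 1, Nat.sub_lt (by omega) Nat.one_pos⟩) t w ∧
        ∀ s : Fin d, w s ≤ i s} =
      ∑ s ∈ (Fintype.piFinset fun _ : Fin (d - 1) =>
            Finset.Icc 1 (i ⟨d - 1, Nat.sub_lt (by omega) Nat.one_pos⟩)).filter
          (fun s => ∀ k : Fin (d - 1),
            1 ≤ s k ∧
            s k + (∑ p ∈ Finset.univ.filter (fun p : Fin (d - 1) => p < k), s p) +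
                (k : ℕ) * (t - 1) ≤
              i ⟨(k : ℕ), Nat.lt_of_lt_of_le k.isLt (Nat.sub_le d 1)⟩),
        (i ⟨d - 1, Nat.sub_lt (by omega) Nat.one_pos⟩ - (d - 1) * (t - 1) -
          ∑ p, s p) := by
  obtain ⟨m, rfl⟩ : ∃ m, d = m + 1 := ⟨d - 1, by omega⟩
  exact TSpread.card_isTSpread_le ht i fun k => hi.monotone (Fin.le_last k)
end

section
/- Let N ⊆ M_{n,d,t} be a t-strongly stable set in the sense that it is closed under Borel moves (for u ∈ N, if j ∈ supp(u), i < j, and x_i(u/x_j) is t-spread, then x_i(u/x_j) ∈ N). Then for every u ∈ N and every t-spread monomial v of degree d with v ≥_Borel u (componentwise smaller indices), we have v ∈ N. -/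
/-! Induct on `u` in the (well-founded) componentwise order on `Fin d → ℕ`. If `v < u`, let `k`
be the first position where `v k < u k` and lower `u k` by one. The result is still `t`-spread:
its entry before `k` agrees with `v`, so it lies at least `t` below `v k ≤ u k - 1`. Since a
`t`-spread sequence with `t ≥ 1` is injective, `u k - 1` was not an index of `u`, so this is a
Borel move; it stays `≥` `v` and is strictly below `u`. -/

open Function

theorem Function.Injective.range_update {α β : Type*} [DecidableEq α] {f : α → β} {k : α}
    {x : β} (hf : Injective f) (hupd : Injective (update f k x)) :
    Set.range (update f k x) = insert x (Set.range f \ {f k}) := by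
  ext y
  constructor
  · rintro ⟨s, rfl⟩
    obtain rfl | hs := eq_or_ne s k
    · simp
    · simpa [hs] using Or.inr (hf.ne hs)
  · rintro (rfl | ⟨⟨s, rfl⟩, hs⟩)
    · exact ⟨k, update_self k y f⟩
    · exact ⟨s, update_of_ne (ne_of_apply_ne f hs) x f⟩

theorem Function.notMem_range_of_injective_update {α β : Type*} [DecidableEq α] {f : α → β}
    {k : α} {x : β} (hupd : Injective (update f k x)) (hx : x ≠ f k) : x ∉ Set.range f := by
  rintro ⟨s, rfl⟩
  obtain rfl | hs := eq_or_ne s k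
  · exact hx rfl
  · exact hs (hupd (by simp [hs]))

namespace IsTSpread

variable {n t d : ℕ} {u v : Fin d → ℕ}

theorem add_le_of_lt (hu : IsTSpread n t u) {a b : Fin d} (hab : a < b) : u a + t ≤ u b := by
  obtain ⟨a, ha⟩ := a
  obtain ⟨b, hb⟩ := b
  induction b with
  | zero => exact absurd hab (Nat.not_lt_zero a)
  | succ b ih =>
    have hstep := hu.2 b hb
    obtain hlt | rfl := Nat.lt_succ_iff_lt_or_eq.1 (Fin.mk_lt_mk.1 hab)
    · have := ih (Nat.lt_of_succ_lt hb) (Fin.mk_lt_mk.2 hlt)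
      omega
    · exact hstep

theorem of_forall_lt (hbound : ∀ k, 1 ≤ u k ∧ u k ≤ n)
    (hgap : ∀ a b : Fin d, a < b → u a + t ≤ u b) : IsTSpread n t u :=
  ⟨hbound, fun j _ => hgap _ _ (Fin.mk_lt_mk.2 j.lt_succ_self)⟩

theorem strictMono (hu : IsTSpread n t u) (ht : 1 ≤ t) : StrictMono u := fun _ _ hab => by
  have := hu.add_le_of_lt hab
  omega

theorem update_pred (hu : IsTSpread n t u) (hv : IsTSpread n t v) {k : Fin d} (hk : v k < u k)
    (hagree : ∀ s < k, v s = u s) : IsTSpread n t (update u k (u k - 1)) := by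
  refine of_forall_lt (fun s => ?_) (fun a b hab => ?_)
  · obtain rfl | hs := eq_or_ne s k
    · have := hv.1 s
      have := hu.1 s
      simp only [update_self]
      omega
    · simpa [hs] using hu.1 s
  · obtain rfl | hb := eq_or_ne b k
    · have := hv.add_le_of_lt hab
      simp only [update_self, update_of_ne hab.ne, ← hagree a hab]
      omega
    · obtain rfl | ha := eq_or_ne a k
      · have := hu.add_le_of_lt hab
        simp only [update_self, update_of_ne hb]
        omega
      · simpa only [update_of_ne ha, update_of_ne hb] using hu.add_le_of_lt hab

end IsTSpread

theorem tstrongly_stable_char_general (n d t : ℕ) (ht : 1 ≤ t)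
    (N : Set (Fin d → ℕ)) (hN : ∀ u ∈ N, IsTSpread n t u)
    (hmove : ∀ u ∈ N, ∀ w : Fin d → ℕ, IsTSpread n t w →
      ∀ a b : ℕ, a < b → b ∈ Set.range u → a ∉ Set.range u →
      Set.range w = insert a (Set.range u \ {b}) → w ∈ N) :
    ∀ u ∈ N, ∀ v : Fin d → ℕ, IsTSpread n t v →
      (∀ s : Fin d, v s ≤ u s) → v ∈ N := by
  intro u hu v hv hvu
  induction u using WellFoundedLT.induction with
  | _ u ih =>
  obtain rfl | hne := eq_or_ne v u
  · exact hu
  obtain ⟨k, hagree, hk⟩ := Pi.lex_lt_of_lt wellFounded_lt (lt_of_le_of_ne hvu hne)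
  have hu' := hN u hu
  have hw := hu'.update_pred hv hk hagree
  have hwinj := (hw.strictMono ht).injective
  have hvk := (hv.1 k).1
  have hwN : update u k (u k - 1) ∈ N :=
    hmove u hu _ hw (u k - 1) (u k) (by omega) ⟨k, rfl⟩
      (notMem_range_of_injective_update hwinj (by omega))
      ((hu'.strictMono ht).injective.range_update hwinj)
  exact ih _ (update_lt_self_iff.2 (by omega)) hwN (le_update_iff.2 ⟨by omega, fun j _ => hvu j⟩)

/-- If `N ⊆ M_{n,d,t}` is closed under admissible Borel moves (replacing an
index `j ∈ supp(u)` by a smaller index `i` whenever the result is `t`-spread),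
then `N` contains every `t`-spread monomial `v` with `v ≥_Borel u` (i.e. the
indices of `v` are componentwise `≤` those of `u`) for each `u ∈ N`. -/
theorem tstrongly_stable_char (n d t : ℕ) (ht : 1 ≤ t) (hd : 1 ≤ d)
    (N : Set (Fin d → ℕ)) (hN : ∀ u ∈ N, IsTSpread n t u)
    (hmove : ∀ u ∈ N, ∀ w : Fin d → ℕ, IsTSpread n t w →
      ∀ a b : ℕ, a < b → b ∈ Set.range u → a ∉ Set.range u →
      Set.range w = insert a (Set.range u \ {b}) → w ∈ N) :
    ∀ u ∈ N, ∀ v : Fin d → ℕ, IsTSpread n t v →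
      (∀ s : Fin d, v s ≤ u s) → v ∈ N :=
  tstrongly_stable_char_general n d t ht N hN hmove
end
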